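/- arXiv:math-ph/0505001 — 2 statements merged into one kernel-verified Lean document; each statement's English description precedes it below -/
import Mathlib

section
/- When ρ = δ_ν is a point mass at a probability measure ν, the cavity function G̃_N(δ_ν) is independent of N and equals g̃(ν) := (n−1)Φ(ν) + log ∫_Ω exp(−Φ^{(1)}(ν, δ_x)) dα(x). -/
open MeasureTheory
open scoped ENNReal

/-!
For fixed `ν`, the functional `μ ↦ Φ^{(1)}(ν, μ)` is affine: integrating out the first `n − 1`
coordinates against `ν` gives `Φ^{(1)}(ν, μ) = n ∫ H dμ` for a measurable `H`, and in
particular `Φ^{(1)}(ν, ν) = nΦ(ν)`. At an empirical measure, `N Φ^{(1)}(ν, ·)` is then a sum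
of `N` independent terms under `α^{⊗N}`, so the partition function factorises into the `N`-th
power of `∫ exp(−Φ^{(1)}(ν, δ_x)) dα(x)`. Integrals against `δ_ν` are evaluations because
singletons of finite measures are measurable when `Ω` is countably generated.
-/

theorem Set.Countable.generatePiSystem {α : Type*} {S : Set (Set α)} (hS : S.Countable) :
    (_root_.generatePiSystem S).Countable := by
  refine Set.Countable.mono ?_ ((Set.countable_ofPred_finite_subset hS).image Set.sInter)
  intro t ht
  induction ht with
  | base hs =>
      exact ⟨{_}, ⟨Set.finite_singleton _, Set.singleton_subset_iff.2 hs⟩,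
        Set.sInter_singleton _⟩
  | inter _ _ _ ihs iht =>
      obtain ⟨F, ⟨hF, hFS⟩, rfl⟩ := ihs
      obtain ⟨G, ⟨hG, hGS⟩, rfl⟩ := iht
      exact ⟨F ∪ G, ⟨hF.union hG, Set.union_subset hFS hGS⟩, Set.sInter_union F G⟩

namespace MeasureTheory

theorem Measure.measurableSet_singleton_of_countablyGenerated {Ω : Type*} [MeasurableSpace Ω]
    [MeasurableSpace.CountablyGenerated Ω] (ν : Measure Ω) [IsFiniteMeasure ν] :
    MeasurableSet ({ν} : Set (Measure Ω)) := by
  set S := generatePiSystem (MeasurableSpace.countableGeneratingSet Ω)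
  have hgen : MeasurableSpace.generateFrom S = ‹MeasurableSpace Ω› := by
    rw [generateFrom_generatePiSystem_eq, MeasurableSpace.generateFrom_countableGeneratingSet]
  have hS : ∀ s ∈ S, MeasurableSet s := fun s hs =>
    hgen ▸ MeasurableSpace.measurableSet_generateFrom hs
  have hset : ({ν} : Set (Measure Ω)) =
      {μ | μ Set.univ = ν Set.univ} ∩ ⋂ s ∈ S, {μ | μ s = ν s} := by
    ext μ
    simp only [Set.mem_singleton_iff, Set.mem_inter_iff, Set.mem_ofPred_eq, Set.mem_iInter]
    refine ⟨by rintro rfl; simp, fun ⟨huniv, hagree⟩ => ?_⟩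
    have : IsFiniteMeasure μ := ⟨huniv ▸ measure_lt_top ν _⟩
    exact ext_of_generate_finite S hgen.symm (isPiSystem_generatePiSystem _) hagree huniv
  rw [hset]
  exact (measurable_coe MeasurableSet.univ (measurableSet_singleton _)).inter <|
    .biInter MeasurableSpace.countable_countableGeneratingSet.generatePiSystem fun s hs =>
      measurable_coe (hS s hs) (measurableSet_singleton _)

theorem integral_dirac_of_measurableSet_singleton {α E : Type*} [MeasurableSpace α]
    [NormedAddCommGroup E] [NormedSpace ℝ E] [CompleteSpace E] {a : α} (ha : MeasurableSet {a})
    (f : α → E) :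
    ∫ x, f x ∂(Measure.dirac a) = f a := by
  have hae : ∀ᵐ x ∂Measure.dirac a, x = a := (ae_dirac_iff ha).2 rfl
  rw [integral_congr_ae (hae.mono fun x hx => congrArg f hx)]
  simp

end MeasureTheory

section LastCoordinate

variable {Ω : Type*} [MeasurableSpace Ω]

theorem integral_pi_ite_last_eq_integral_integral {m : ℕ} {φ : (Fin (m + 1) → Ω) → ℝ}
    (hmeas : Measurable φ) {C : ℝ} (hb : ∀ y, |φ y| ≤ C)
    (ν μ : Measure Ω) [IsProbabilityMeasure ν] [IsProbabilityMeasure μ] :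
    ∫ y, φ y ∂(Measure.pi fun i : Fin (m + 1) => if (i : ℕ) + 1 = m + 1 then μ else ν)
      = ∫ a, (∫ y : Fin m → Ω,
          φ ((MeasurableEquiv.piFinSuccAbove (fun _ => Ω) (Fin.last m)).symm (a, y))
          ∂(Measure.pi fun _ => ν)) ∂μ := by
  set e := MeasurableEquiv.piFinSuccAbove (fun _ : Fin (m + 1) => Ω) (Fin.last m)
  set μs : Fin (m + 1) → Measure Ω := fun i => if (i : ℕ) + 1 = m + 1 then μ else ν
  have : ∀ i, IsProbabilityMeasure (μs i) := fun i => by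
    simp only [μs]; split <;> infer_instance
  have hmp := measurePreserving_piFinSuccAbove μs (Fin.last m)
  have hlast : μs (Fin.last m) = μ := by simp [μs]
  have hinit : (fun j : Fin m => μs ((Fin.last m).succAbove j)) = fun _ => ν := by
    funext j
    simp [μs, Fin.succAbove_last, j.is_lt.ne]
  rw [hlast, hinit] at hmp
  have hint : Integrable (fun p => φ (e.symm p)) (μ.prod (Measure.pi fun _ : Fin m => ν)) :=
    .of_bound (hmeas.comp e.symm.measurable).aestronglyMeasurable C
      (.of_forall fun p => hb (e.symm p))
  rw [← (hmp.symm e).integral_comp' φ]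
  exact integral_prod _ hint

theorem exists_integral_pi_ite_last_eq {n : ℕ} {φ : (Fin n → Ω) → ℝ} (hmeas : Measurable φ)
    {C : ℝ} (hb : ∀ y, |φ y| ≤ C) (ν : Measure Ω) [IsProbabilityMeasure ν] :
    ∃ H : Ω → ℝ, StronglyMeasurable H ∧ ∀ (μ : Measure Ω) [IsProbabilityMeasure μ],
      ∫ y, φ y ∂(Measure.pi fun i : Fin n => if (i : ℕ) + 1 = n then μ else ν)
        = ∫ a, H a ∂μ := by
  cases n with
  | zero =>
    exact ⟨fun _ => φ default, stronglyMeasurable_const, fun μ _ => by simp [integral_unique]⟩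
  | succ m =>
    exact ⟨_, (hmeas.comp (MeasurableEquiv.piFinSuccAbove _ _).symm.measurable)
      |>.stronglyMeasurable.integral_prod_right',
      fun μ _ => integral_pi_ite_last_eq_integral_integral hmeas hb ν μ⟩

end LastCoordinate

section EmpiricalMeasure

variable {Ω : Type*} [MeasurableSpace Ω] {N : ℕ}

noncomputable def empiricalMeasure (x : Fin N → Ω) : Measure Ω :=
  (N : ℝ≥0∞)⁻¹ • ∑ i, Measure.dirac (x i)

theorem isProbabilityMeasure_empiricalMeasure (hN : N ≠ 0) (x : Fin N → Ω) :
    IsProbabilityMeasure (empiricalMeasure x) := by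
  constructor
  simp [empiricalMeasure, Measure.finsetSum_apply, ENNReal.inv_mul_cancel, hN]

theorem integral_empiricalMeasure {f : Ω → ℝ} (hf : StronglyMeasurable f) (x : Fin N → Ω) :
    ∫ a, f a ∂(empiricalMeasure x) = (N : ℝ)⁻¹ * ∑ i, f (x i) := by
  rw [empiricalMeasure, integral_smul_measure,
    integral_finsetSum_measure fun i _ => integrable_dirac' hf enorm_lt_top]
  simp [integral_dirac' f _ hf]

theorem inv_mul_log_integral_exp_empiricalMeasure {F : Measure Ω → ℝ} {H : Ω → ℝ}
    (hH : StronglyMeasurable H)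
    (hF : ∀ (μ : Measure Ω) [IsProbabilityMeasure μ], F μ = ∫ a, H a ∂μ)
    (α : Measure Ω) [SigmaFinite α] (hN : N ≠ 0) :
    (N : ℝ)⁻¹ * Real.log (∫ x : Fin N → Ω, Real.exp (-(N * F (empiricalMeasure x)))
        ∂(Measure.pi fun _ => α))
      = Real.log (∫ a, Real.exp (-F (Measure.dirac a)) ∂α) := by
  have hfactor : ∀ x : Fin N → Ω,
      Real.exp (-(N * F (empiricalMeasure x))) = ∏ i, Real.exp (-H (x i)) := fun x => by
    have := isProbabilityMeasure_empiricalMeasure hN x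
    rw [hF, integral_empiricalMeasure hH, ← Real.exp_sum, Finset.sum_neg_distrib]
    field_simp
  have hdirac : ∀ a, F (Measure.dirac a) = H a := fun a => by rw [hF, integral_dirac' H a hH]
  simp only [hfactor, hdirac]
  rw [integral_fintype_prod_eq_pow (fun a => Real.exp (-H a)), Real.log_pow, Fintype.card_fin]
  field_simp

end EmpiricalMeasure

theorem cavity_function_at_dirac_general
    {Ω : Type*} [MetricSpace Ω] [CompactSpace Ω] [MeasurableSpace Ω] [BorelSpace Ω]
    (α : Measure Ω) [IsProbabilityMeasure α] (n : ℕ)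
    (φ : (Fin n → Ω) → ℝ) (hmeas : Measurable φ) (C : ℝ) (hb : ∀ y, |φ y| ≤ C)
    (Φ : Measure Ω → ℝ)
    (hΦ : ∀ μ : Measure Ω, Φ μ = ∫ y, φ y ∂(Measure.pi fun _ : Fin n => μ))
    (Φ1 : Measure Ω → Measure Ω → ℝ)
    (hΦ1 : ∀ ν μ : Measure Ω, Φ1 ν μ =
      n * ∫ y, φ y ∂(Measure.pi fun i : Fin n => if (i : ℕ) + 1 = n then μ else ν))
    (ν : Measure Ω) [IsProbabilityMeasure ν]
    (N : ℕ) (hN : 1 ≤ N) :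
    (N : ℝ)⁻¹ * Real.log (∫ ν', (∫ x : Fin N → Ω,
        Real.exp (-((N : ℝ) * Φ1 ν' (((N : ℝ≥0∞))⁻¹ • ∑ i : Fin N, Measure.dirac (x i))))
          ∂(Measure.pi fun _ : Fin N => α)) ∂(Measure.dirac ν))
    - (N : ℝ)⁻¹ * Real.log (∫ ν',
        Real.exp (-((N : ℝ) * (Φ1 ν' ν' - Φ ν'))) ∂(Measure.dirac ν))
    = ((n : ℝ) - 1) * Φ ν
      + Real.log (∫ x, Real.exp (-(Φ1 ν (Measure.dirac x))) ∂α) := by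
  obtain ⟨H, hHm, hH⟩ := exists_integral_pi_ite_last_eq hmeas hb ν
  have hΦ1_affine : ∀ (μ : Measure Ω) [IsProbabilityMeasure μ], Φ1 ν μ = ∫ a, n * H a ∂μ :=
    fun μ _ => by rw [hΦ1, hH, integral_const_mul]
  have hΦ1_diag : Φ1 ν ν = n * Φ ν := by
    simp only [hΦ1, hΦ, ite_self]
  have hfree := inv_mul_log_integral_exp_empiricalMeasure (N := N) (hHm.const_mul n)
    hΦ1_affine α (by omega)
  have hsingleton := Measure.measurableSet_singleton_of_countablyGenerated ν
  rw [integral_dirac_of_measurableSet_singleton hsingleton,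
    integral_dirac_of_measurableSet_singleton hsingleton, Real.log_exp, hΦ1_diag]
  simp only [← empiricalMeasure.eq_1, hfree]
  field_simp
  ring

/-- When `ρ = δ_ν` is a point mass at a probability measure `ν`, the
cavity function `G̃_N(δ_ν) = G̃_N^{(1)}(δ_ν) − G̃_N^{(2)}(δ_ν)` is independent of `N` and
equals `g̃(ν) = (n−1)Φ(ν) + log ∫_Ω exp(−Φ^{(1)}(ν, δ_x)) dα(x)`. -/
theorem cavity_function_at_dirac
    {Ω : Type*} [MetricSpace Ω] [CompactSpace Ω] [MeasurableSpace Ω] [BorelSpace Ω]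
    (α : Measure Ω) [IsProbabilityMeasure α] (n : ℕ) (hn : 1 ≤ n)
    (φ : (Fin n → Ω) → ℝ) (hmeas : Measurable φ) (C : ℝ) (hb : ∀ y, |φ y| ≤ C)
    (hsym : ∀ (σ : Equiv.Perm (Fin n)) (y : Fin n → Ω), φ (y ∘ σ) = φ y)
    (Φ : Measure Ω → ℝ)
    (hΦ : ∀ μ : Measure Ω, Φ μ = ∫ y, φ y ∂(Measure.pi fun _ : Fin n => μ))
    (Φ1 : Measure Ω → Measure Ω → ℝ)
    (hΦ1 : ∀ ν μ : Measure Ω, Φ1 ν μ =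
      n * ∫ y, φ y ∂(Measure.pi fun i : Fin n => if (i : ℕ) + 1 = n then μ else ν))
    (ν : Measure Ω) [IsProbabilityMeasure ν]
    (N : ℕ) (hN : 1 ≤ N) :
    (N : ℝ)⁻¹ * Real.log (∫ ν', (∫ x : Fin N → Ω,
        Real.exp (-((N : ℝ) * Φ1 ν' (((N : ℝ≥0∞))⁻¹ • ∑ i : Fin N, Measure.dirac (x i))))
          ∂(Measure.pi fun _ : Fin N => α)) ∂(Measure.dirac ν))
    - (N : ℝ)⁻¹ * Real.log (∫ ν',
        Real.exp (-((N : ℝ) * (Φ1 ν' ν' - Φ ν'))) ∂(Measure.dirac ν))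
    = ((n : ℝ) - 1) * Φ ν
      + Real.log (∫ x, Real.exp (-(Φ1 ν (Measure.dirac x))) ∂α) :=
  cavity_function_at_dirac_general α n φ hmeas C hb Φ hΦ Φ1 hΦ1 ν N hN
end

section
/- Subadditivity of the mean-field pressure: for the symmetric Hamiltonian H_N(x) = N·binom(N,n)^{-1}·Σ φ(x_{i(1)},…,x_{i(n)}) with φ bounded below, Borel measurable, symmetric, and α^{⊗n}(φ) < ∞, the sequence N·p(N), where p(N) = N^{-1} log ∫ e^{−H_N} dα^{⊗N}, satisfies (N₁+N₂)p(N₁+N₂) ≤ N₁p(N₁) + N₂p(N₂) for N₁,N₂ ≥ n. Moreover p(N) ≥ −α^{⊗n}(φ) for each N ≥ n, so p(N) converges to a finite limit. -/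
open MeasureTheory Filter
open scoped ENNReal Classical

/-- `e^{-x}` for `x : EReal`, with values in `ℝ≥0∞` (so `e^{-⊤} = 0`, `e^{-⊥} = ∞`). -/
noncomputable def expNeg (x : EReal) : ℝ≥0∞ :=
  if x = ⊤ then 0 else if x = ⊥ then ⊤ else ENNReal.ofReal (Real.exp (-x.toReal))

/-!
Write `H_N` for the mean-field Hamiltonian of the real potential `ρ = (φ ·).toReal` and
`Z_N = ∫ e^{-H_N} dα^{⊗N}`. Almost surely `φ` is finite along every tuple of distinct coordinates,
so `p(N) = log Z_N / N`.

Every `n`-subset of `{1, …, N₁ + N₂}` lies in equally many `N₁`-subsets `S`, so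
`H_{N₁+N₂}(x)` is the average over `S` of `H_{N₁}(x|_S) + H_{N₂}(x|_{Sᶜ})`. Convexity of `exp` turns
this into `e^{-H_{N₁+N₂}(x)} ≤ avg_S e^{-H_{N₁}(x|_S)} e^{-H_{N₂}(x|_{Sᶜ})}`, and since `x|_S`
and `x|_{Sᶜ}` are independent, integrating gives `Z_{N₁+N₂} ≤ Z_{N₁} Z_{N₂}`. Jensen's inequality
for the integral, with `∫ H_N = N ∫ ρ`, gives `log Z_N ≥ -N ∫ ρ`. Fekete's lemma, in the version
for sequences that are subadditive only beyond `n`, then yields convergence.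
-/

open Finset Topology

section Fekete

variable {a : ℕ → ℝ} {n₀ : ℕ}

theorem apply_mul_add_le_of_subadditive_ge
    (hsub : ∀ m k, n₀ ≤ m → n₀ ≤ k → a (m + k) ≤ a m + a k)
    {m r : ℕ} (hm : n₀ ≤ m) (hr : n₀ ≤ r) (k : ℕ) : a (m * k + r) ≤ k * a m + a r := by
  induction k with
  | zero => simp
  | succ k ih =>
    calc a (m * (k + 1) + r) = a ((m * k + r) + m) := by congr 1; ring
      _ ≤ a (m * k + r) + a m := hsub _ _ (hr.trans (Nat.le_add_left _ _)) hm
      _ ≤ (k * a m + a r) + a m := by gcongr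
      _ = (k + 1 : ℕ) * a m + a r := by push_cast; ring

theorem tendsto_mul_add_div_mul_add (A B : ℝ) {m : ℕ} (hm : m ≠ 0) (s : ℕ) :
    Tendsto (fun k : ℕ => (k * A + B) / (k * m + s)) atTop (𝓝 (A / m)) := by
  have h : Tendsto (fun x : ℝ => (A + B / x) / (m + s / x)) atTop (𝓝 ((A + 0) / (m + 0))) :=
    (tendsto_const_nhds.add <| tendsto_const_nhds.div_atTop tendsto_id).div
      (tendsto_const_nhds.add <| tendsto_const_nhds.div_atTop tendsto_id) (by simpa)
  rw [add_zero, add_zero] at h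
  have h' : Tendsto (fun x : ℝ => (x * A + B) / (x * m + s)) atTop (𝓝 (A / m)) :=
    h.congr' ((eventually_ne_atTop 0).mono fun x hx => by
      simp only [add_div' _ _ _ hx, div_div_div_cancel_right₀ hx, mul_comm])
  exact h'.comp tendsto_natCast_atTop_atTop

theorem eventually_div_lt_of_subadditive_ge
    (hsub : ∀ m k, n₀ ≤ m → n₀ ≤ k → a (m + k) ≤ a m + a k)
    {m : ℕ} (hm : n₀ ≤ m) (hm₀ : m ≠ 0) {l : ℝ} (hl : a m / m < l) :
    ∀ᶠ N in atTop, a N / N < l := by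
  -- Along the progression `N = m k + (r + n₀)`, `a N ≤ k a m + a (r + n₀)`.
  rw [← map_add_atTop_eq_nat n₀, eventually_map]
  refine .atTop_of_arithmetic hm₀ fun r _ => ?_
  filter_upwards [(tendsto_mul_add_div_mul_add (a m) (a (r + n₀)) hm₀ (r + n₀)).eventually
    (gt_mem_nhds hl)] with k hk
  refine lt_of_le_of_lt ?_ hk
  rw [add_assoc, mul_comm m k]
  push_cast
  gcongr
  rw [mul_comm k m]
  exact apply_mul_add_le_of_subadditive_ge hsub hm (Nat.le_add_left _ _) k

theorem tendsto_div_sInf_of_subadditive_ge (hn₀ : n₀ ≠ 0)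
    (hsub : ∀ m k, n₀ ≤ m → n₀ ≤ k → a (m + k) ≤ a m + a k)
    (hbdd : BddBelow ((fun N => a N / N) '' Set.Ici n₀)) :
    Tendsto (fun N => a N / N) atTop (𝓝 (sInf ((fun N => a N / N) '' Set.Ici n₀))) := by
  refine tendsto_order.2 ⟨fun l hl => ?_, fun l hl => ?_⟩
  · exact eventually_atTop.2 ⟨n₀, fun N hN => hl.trans_le (csInf_le hbdd ⟨N, hN, rfl⟩)⟩
  · obtain ⟨_, ⟨m, hm, rfl⟩, hml⟩ :=
      exists_lt_of_csInf_lt (Set.image_nonempty.2 Set.nonempty_Ici) hl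
    exact eventually_div_lt_of_subadditive_ge hsub hm (by grind) hml

end Fekete

section Counting

variable {n N : ℕ}

theorem card_filter_strictMono :
    #(univ.filter fun j : Fin n → Fin N => StrictMono j) = N.choose n := by
  have hcard {j : Fin n → Fin N} (hj : StrictMono j) : #(univ.image j) = n := by
    simp [card_image_of_injective _ hj.injective]
  rw [show N.choose n = #(powersetCard n (univ : Finset (Fin N))) by simp]
  refine card_bij (fun j _ => univ.image j) (fun j hj => ?_) (fun j₁ hj₁ j₂ hj₂ h => ?_)
    (fun S hS => ?_)
  · simp [mem_powersetCard, hcard (mem_filter.1 hj).2]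
  · have h₁ := (mem_filter.1 hj₁).2
    have h₂ := (mem_filter.1 hj₂).2
    have e₁ := orderEmbOfFin_unique (hcard h₁) (fun i => mem_image_of_mem j₁ (mem_univ i)) h₁
    have e₂ := orderEmbOfFin_unique (hcard h₂) (fun i => mem_image_of_mem j₂ (mem_univ i)) h₂
    simp only [h] at e₁
    exact e₁.trans e₂.symm
  · have hS' := (mem_powersetCard.1 hS).2
    refine ⟨S.orderEmbOfFin hS', by simp [(S.orderEmbOfFin hS').strictMono], ?_⟩
    exact image_orderEmbOfFin_univ S hS'

theorem sum_ite_strictMono_const {M : Type*} [AddCommMonoid M] (c : M) :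
    ∑ j : Fin n → Fin N, (if StrictMono j then c else 0) = N.choose n • c := by
  rw [← sum_filter, sum_const, card_filter_strictMono]

theorem div_choose_mul_sum_ite_strictMono_const (hN : n ≤ N) (c : ℝ) :
    (N / N.choose n : ℝ) * ∑ j : Fin n → Fin N, (if StrictMono j then c else 0) = N * c := by
  have : (N.choose n : ℝ) ≠ 0 := by exact_mod_cast (Nat.choose_pos hN).ne'
  rw [sum_ite_strictMono_const, nsmul_eq_mul]
  field_simp

theorem sum_strictMono_comp_orderEmbOfFin {M : Type*} [AddCommMonoid M] (S : Finset (Fin N))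
    (F : (Fin n → Fin N) → M) :
    ∑ j : Fin n → Fin #S, (if StrictMono j then F (S.orderEmbOfFin rfl ∘ j) else 0)
      = ∑ k : Fin n → Fin N, if StrictMono k ∧ univ.image k ⊆ S then F k else 0 := by
  rw [← sum_filter, ← sum_filter]
  refine sum_bij (fun j _ => S.orderEmbOfFin rfl ∘ j) (fun j hj => ?_)
    (fun j₁ _ j₂ _ h => ?_) (fun k hk => ?_) (fun _ _ => rfl)
  · refine mem_filter.2 ⟨mem_univ _, (S.orderEmbOfFin rfl).strictMono.comp (mem_filter.1 hj).2, ?_⟩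
    simp [image_subset_iff, S.orderEmbOfFin_mem]
  · exact funext fun i => (S.orderEmbOfFin rfl).injective (congrFun h i)
  · obtain ⟨-, hk, hkS⟩ := mem_filter.1 hk
    rw [image_subset_iff] at hkS
    refine ⟨fun i => (S.orderIsoOfFin rfl).symm ⟨k i, hkS i (mem_univ i)⟩,
      mem_filter.2 ⟨mem_univ _, fun i i' h => (S.orderIsoOfFin rfl).symm.strictMono (hk h)⟩, ?_⟩
    funext i
    simp [← S.coe_orderIsoOfFin_apply]

theorem sum_powersetCard_sum_strictMono_subset {m : ℕ} (hnm : n ≤ m)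
    (F : (Fin n → Fin N) → ℝ) :
    ∑ S ∈ powersetCard m univ, ∑ k : Fin n → Fin N,
        (if StrictMono k ∧ univ.image k ⊆ S then F k else 0)
      = (N - n).choose (m - n) * ∑ k : Fin n → Fin N, if StrictMono k then F k else 0 := by
  rw [sum_comm, mul_sum]
  refine sum_congr rfl fun k _ => ?_
  by_cases hk : StrictMono k
  · have hcard : #(univ.image k) = n := by simp [card_image_of_injective _ hk.injective]
    simp only [hk, true_and, if_true]
    rw [← sum_filter, sum_const, card_filter_powersetCard_subset _ _ _ (subset_univ _)
      (hcard.trans_le hnm), hcard, card_univ, Fintype.card_fin, nsmul_eq_mul]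
  · simp [hk]

theorem Finset.sum_powersetCard_compl {β M : Type*} [Fintype β] [DecidableEq β]
    [AddCommMonoid M] {k : ℕ} (hk : k ≤ Fintype.card β) (f : Finset β → M) :
    ∑ S ∈ powersetCard k univ, f Sᶜ = ∑ T ∈ powersetCard (Fintype.card β - k) univ, f T := by
  refine sum_nbij' compl compl (fun S hS => ?_) (fun T hT => ?_) (fun S _ => compl_compl S)
    (fun T _ => compl_compl T) (fun S _ => rfl)
  all_goals
    simp only [mem_powersetCard, subset_univ, true_and, card_compl] at *
    omega

theorem Finset.bijective_sumElim_orderEmbOfFin_compl {β : Type*} [Fintype β] [LinearOrder β]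
    (S : Finset β) :
    Function.Bijective (Sum.elim (S.orderEmbOfFin rfl) (Sᶜ.orderEmbOfFin rfl)) := by
  rw [Fintype.bijective_iff_injective_and_card]
  refine ⟨(S.orderEmbOfFin rfl).injective.sumElim (Sᶜ.orderEmbOfFin rfl).injective
    fun a b h => ?_, by simp [card_add_card_compl]⟩
  have ha := S.orderEmbOfFin_mem rfl a
  have hb := Sᶜ.orderEmbOfFin_mem rfl b
  rw [← h, mem_compl] at hb
  exact hb ha

end Counting

section Hamiltonian

variable {Ω : Type*} {n : ℕ}

noncomputable def meanFieldHamiltonian (ρ : (Fin n → Ω) → ℝ) (N : ℕ) (x : Fin N → Ω) :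
    ℝ :=
  ((N : ℝ) / (N.choose n : ℝ)) * ∑ j : Fin n → Fin N, if StrictMono j then ρ (x ∘ j) else 0

theorem meanFieldHamiltonian_const {N : ℕ} (hN : n ≤ N) (b : ℝ) (x : Fin N → Ω) :
    meanFieldHamiltonian (fun _ : Fin n → Ω => b) N x = N * b :=
  div_choose_mul_sum_ite_strictMono_const hN b

theorem meanFieldHamiltonian_mono {ρ ρ' : (Fin n → Ω) → ℝ} (h : ∀ y, ρ y ≤ ρ' y) (N : ℕ)
    (x : Fin N → Ω) : meanFieldHamiltonian ρ N x ≤ meanFieldHamiltonian ρ' N x := by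
  unfold meanFieldHamiltonian
  gcongr with j
  split_ifs
  exacts [h _, le_rfl]

variable (ρ : (Fin n → Ω) → ℝ)

theorem sum_powersetCard_meanFieldHamiltonian_comp_orderEmbOfFin {m N : ℕ} (hnm : n ≤ m)
    (hmN : m ≤ N) (x : Fin N → Ω) :
    ∑ S ∈ powersetCard m univ, meanFieldHamiltonian ρ #S (x ∘ S.orderEmbOfFin rfl)
      = m * N.choose m / N.choose n *
          ∑ k : Fin n → Fin N, if StrictMono k then ρ (x ∘ k) else 0 := by
  have hcoeff : (m / m.choose n : ℝ) * (N - n).choose (m - n) = m * N.choose m / N.choose n := by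
    have hchoose : (N.choose m * m.choose n : ℝ) = N.choose n * (N - n).choose (m - n) := by
      exact_mod_cast Nat.choose_mul hnm
    have hm : (m.choose n : ℝ) ≠ 0 := by exact_mod_cast (Nat.choose_pos hnm).ne'
    have hN : (N.choose n : ℝ) ≠ 0 := by exact_mod_cast (Nat.choose_pos (hnm.trans hmN)).ne'
    rw [div_mul_eq_mul_div, div_eq_div_iff hm hN]
    linear_combination -(m : ℝ) * hchoose
  calc _ = ∑ S ∈ powersetCard m univ, (m / m.choose n : ℝ) *
        ∑ k : Fin n → Fin N, (if StrictMono k ∧ univ.image k ⊆ S then ρ (x ∘ k) else 0) := by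
        refine sum_congr rfl fun S hS => ?_
        rw [meanFieldHamiltonian, ← sum_strictMono_comp_orderEmbOfFin S (fun k => ρ (x ∘ k))]
        congr 1
        rw [(mem_powersetCard.1 hS).2]
    _ = (m / m.choose n : ℝ) * ((N - n).choose (m - n) *
        ∑ k : Fin n → Fin N, if StrictMono k then ρ (x ∘ k) else 0) := by
        rw [← mul_sum, sum_powersetCard_sum_strictMono_subset hnm]
    _ = _ := by rw [← mul_assoc, hcoeff]

theorem meanFieldHamiltonian_add_eq_sum {N₁ N₂ : ℕ} (h₁ : n ≤ N₁) (h₂ : n ≤ N₂)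
    (x : Fin (N₁ + N₂) → Ω) :
    meanFieldHamiltonian ρ (N₁ + N₂) x = ∑ S ∈ powersetCard N₁ univ,
      ((N₁ + N₂).choose N₁ : ℝ)⁻¹ * (meanFieldHamiltonian ρ #S (x ∘ S.orderEmbOfFin rfl)
        + meanFieldHamiltonian ρ #Sᶜ (x ∘ Sᶜ.orderEmbOfFin rfl)) := by
  have hcompl : ∑ S ∈ powersetCard N₁ univ,
        meanFieldHamiltonian ρ #Sᶜ (x ∘ Sᶜ.orderEmbOfFin rfl)
      = ∑ T ∈ powersetCard N₂ univ, meanFieldHamiltonian ρ #T (x ∘ T.orderEmbOfFin rfl) := by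
    rw [sum_powersetCard_compl (by simp)
        fun T => meanFieldHamiltonian ρ #T (x ∘ T.orderEmbOfFin rfl),
      Fintype.card_fin, Nat.add_sub_cancel_left]
  have hC : ((N₁ + N₂).choose N₁ : ℝ) ≠ 0 := by
    exact_mod_cast (Nat.choose_pos (Nat.le_add_right _ _)).ne'
  rw [← mul_sum, sum_add_distrib, hcompl,
    sum_powersetCard_meanFieldHamiltonian_comp_orderEmbOfFin ρ h₁ (Nat.le_add_right _ _),
    sum_powersetCard_meanFieldHamiltonian_comp_orderEmbOfFin ρ h₂ (Nat.le_add_left _ _),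
    ← Nat.choose_symm_add, meanFieldHamiltonian]
  field_simp
  push_cast
  ring

theorem exp_neg_meanFieldHamiltonian_add_le {N₁ N₂ : ℕ} (h₁ : n ≤ N₁) (h₂ : n ≤ N₂)
    (x : Fin (N₁ + N₂) → Ω) :
    Real.exp (-meanFieldHamiltonian ρ (N₁ + N₂) x) ≤ ∑ S ∈ powersetCard N₁ univ,
      ((N₁ + N₂).choose N₁ : ℝ)⁻¹ *
        (Real.exp (-meanFieldHamiltonian ρ #S (x ∘ S.orderEmbOfFin rfl))
          * Real.exp (-meanFieldHamiltonian ρ #Sᶜ (x ∘ Sᶜ.orderEmbOfFin rfl))) := by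
  have hw : ∑ _S ∈ powersetCard N₁ (univ : Finset (Fin (N₁ + N₂))),
      ((N₁ + N₂).choose N₁ : ℝ)⁻¹ = 1 := by
    have hC : ((N₁ + N₂).choose N₁ : ℝ) ≠ 0 := by
      exact_mod_cast (Nat.choose_pos (Nat.le_add_right _ _)).ne'
    simp [hC]
  have := convexOn_exp.map_sum_le (fun _ _ => by positivity) hw
    (p := fun S => -(meanFieldHamiltonian ρ #S (x ∘ S.orderEmbOfFin rfl)
        + meanFieldHamiltonian ρ #Sᶜ (x ∘ Sᶜ.orderEmbOfFin rfl))) (fun _ _ => Set.mem_univ _)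
  rw [meanFieldHamiltonian_add_eq_sum ρ h₁ h₂, ← sum_neg_distrib]
  refine Eq.trans_le ?_ (this.trans_eq (sum_congr rfl fun S _ => ?_))
  · simp only [smul_eq_mul, mul_neg]
  · rw [smul_eq_mul, neg_add, Real.exp_add]

end Hamiltonian

section ProductMeasure

variable {Ω : Type*} [MeasurableSpace Ω] (α : Measure Ω)
  {ι ι₁ ι₂ κ : Type*} [Fintype ι] [Fintype ι₁] [Fintype ι₂] [Fintype κ]

theorem measurePreserving_comp_inl_comp_inr [SigmaFinite α] (e : ι₁ ⊕ ι₂ ≃ κ) :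
    MeasurePreserving (fun x : κ → Ω => (x ∘ e ∘ Sum.inl, x ∘ e ∘ Sum.inr))
      (Measure.pi fun _ => α) ((Measure.pi fun _ => α).prod (Measure.pi fun _ => α)) :=
  (measurePreserving_sumPiEquivProdPi fun _ => α).comp
    ((measurePreserving_piCongrLeft (fun _ => α) e).symm)

theorem integral_comp_inl_mul_comp_inr [SigmaFinite α] (e : ι₁ ⊕ ι₂ ≃ κ)
    (f : (ι₁ → Ω) → ℝ) (g : (ι₂ → Ω) → ℝ) :
    ∫ x, f (x ∘ e ∘ Sum.inl) * g (x ∘ e ∘ Sum.inr) ∂Measure.pi (fun _ => α)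
      = (∫ y, f y ∂Measure.pi fun _ => α) * ∫ z, g z ∂Measure.pi fun _ => α := by
  rw [← integral_prod_mul]
  exact (measurePreserving_comp_inl_comp_inr α e).integral_comp
    ((MeasurableEquiv.piCongrLeft _ e).symm.trans
      (MeasurableEquiv.sumPiEquivProdPi _)).measurableEmbedding (fun z => f z.1 * g z.2)

theorem Integrable.comp_inl_mul_comp_inr [SigmaFinite α] (e : ι₁ ⊕ ι₂ ≃ κ)
    {f : (ι₁ → Ω) → ℝ} {g : (ι₂ → Ω) → ℝ} (hf : Integrable f (Measure.pi fun _ => α))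
    (hg : Integrable g (Measure.pi fun _ => α)) :
    Integrable (fun x => f (x ∘ e ∘ Sum.inl) * g (x ∘ e ∘ Sum.inr)) (Measure.pi fun _ => α) :=
  (measurePreserving_comp_inl_comp_inr α e).integrable_comp_of_integrable (hf.mul_prod hg)

variable [IsProbabilityMeasure α]

theorem measurePreserving_comp_of_injective {j : ι → κ} (hj : Function.Injective j) :
    MeasurePreserving (fun x : κ → Ω => x ∘ j) (Measure.pi fun _ => α)
      (Measure.pi fun _ => α) :=
  measurePreserving_fst.comp (measurePreserving_comp_inl_comp_inr α
    ((Equiv.sumCongr (Equiv.ofInjective j hj) (Equiv.refl _)).trans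
      (Equiv.Set.sumCompl (Set.range j))))

theorem integral_comp_of_injective {j : ι → κ} (hj : Function.Injective j) {f : (ι → Ω) → ℝ}
    (hf : AEStronglyMeasurable f (Measure.pi fun _ => α)) :
    ∫ x, f (x ∘ j) ∂Measure.pi (fun _ => α) = ∫ y, f y ∂Measure.pi fun _ => α := by
  have h := measurePreserving_comp_of_injective α hj
  rw [← h.map_eq] at hf ⊢
  exact (integral_map h.measurable.aemeasurable hf).symm

theorem ae_forall_comp_of_injective {P : (ι → Ω) → Prop}
    (h : ∀ᵐ y ∂Measure.pi (fun _ => α), P y) :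
    ∀ᵐ x ∂Measure.pi (fun _ : κ => α), ∀ j : ι → κ, Function.Injective j → P (x ∘ j) := by
  rw [ae_all_iff]
  intro j
  by_cases hj : Function.Injective j
  · exact ((measurePreserving_comp_of_injective α hj).quasiMeasurePreserving.ae h).mono
      fun x hx _ => hx
  · exact .of_forall fun x hj' => absurd hj' hj

end ProductMeasure

theorem EReal.coe_finsetSum {β : Type*} (s : Finset β) (f : β → ℝ) :
    ((∑ b ∈ s, f b : ℝ) : EReal) = ∑ b ∈ s, (f b : EReal) :=
  map_sum (⟨⟨(↑), EReal.coe_zero⟩, EReal.coe_add⟩ : ℝ →+ EReal) f s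

theorem EReal.min_le_toReal {c : ℝ} {x : EReal} (h : (c : EReal) ≤ x) : min c 0 ≤ x.toReal := by
  induction x using EReal.rec with
  | bot => simp at h
  | coe r => exact min_le_of_left_le (EReal.coe_le_coe_iff.1 h)
  | top => exact min_le_right c 0

section PartitionFunction

variable {Ω : Type*} [MeasurableSpace Ω] (α : Measure Ω) [IsProbabilityMeasure α] {n : ℕ}
  {ρ : (Fin n → Ω) → ℝ} {b : ℝ}

noncomputable def partitionFunction (ρ : (Fin n → Ω) → ℝ) (N : ℕ) : ℝ :=
  ∫ x, Real.exp (-meanFieldHamiltonian ρ N x) ∂Measure.pi fun _ : Fin N => α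

theorem measurable_meanFieldHamiltonian (hρ : Measurable ρ) (N : ℕ) :
    Measurable (meanFieldHamiltonian ρ N) := by
  refine .const_mul (Finset.measurable_sum _ fun j _ => ?_) _
  split_ifs
  exacts [hρ.comp (measurable_pi_lambda _ fun i => measurable_pi_apply _), measurable_const]

theorem integrable_exp_neg_meanFieldHamiltonian (hρ : Measurable ρ) (hb : ∀ y, b ≤ ρ y)
    {N : ℕ} (hN : n ≤ N) :
    Integrable (fun x => Real.exp (-meanFieldHamiltonian ρ N x)) (Measure.pi fun _ => α) := by
  refine .mono' (integrable_const (Real.exp (-(N * b))))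
    (measurable_meanFieldHamiltonian hρ N).neg.exp.aestronglyMeasurable (.of_forall fun x => ?_)
  rw [Real.norm_eq_abs, Real.abs_exp, Real.exp_le_exp, neg_le_neg_iff,
    ← meanFieldHamiltonian_const hN b x]
  exact meanFieldHamiltonian_mono hb N x

theorem partitionFunction_pos (hρ : Measurable ρ) (hb : ∀ y, b ≤ ρ y) {N : ℕ} (hN : n ≤ N) :
    0 < partitionFunction α ρ N :=
  integral_exp_pos (integrable_exp_neg_meanFieldHamiltonian α hρ hb hN)

theorem integrable_ite_strictMono_comp (hρ : Integrable ρ (Measure.pi fun _ => α)) {N : ℕ}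
    (j : Fin n → Fin N) :
    Integrable (fun x => if StrictMono j then ρ (x ∘ j) else 0) (Measure.pi fun _ => α) := by
  split_ifs with hj
  exacts [(measurePreserving_comp_of_injective α hj.injective).integrable_comp_of_integrable hρ,
    integrable_zero _ _ _]

theorem integrable_meanFieldHamiltonian (hρ : Integrable ρ (Measure.pi fun _ => α)) (N : ℕ) :
    Integrable (meanFieldHamiltonian ρ N) (Measure.pi fun _ => α) :=
  .const_mul (integrable_finsetSum _ fun j _ => integrable_ite_strictMono_comp α hρ j) _

theorem integral_meanFieldHamiltonian (hρ : Integrable ρ (Measure.pi fun _ => α)) {N : ℕ}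
    (hN : n ≤ N) :
    ∫ x, meanFieldHamiltonian ρ N x ∂Measure.pi (fun _ => α)
      = N * ∫ y, ρ y ∂Measure.pi fun _ => α := by
  have hterm (j : Fin n → Fin N) :
      ∫ x, (if StrictMono j then ρ (x ∘ j) else 0) ∂Measure.pi (fun _ => α)
        = if StrictMono j then ∫ y, ρ y ∂Measure.pi fun _ => α else 0 := by
    split_ifs with hj
    exacts [integral_comp_of_injective α hj.injective hρ.aestronglyMeasurable, integral_zero _ _]
  simp only [meanFieldHamiltonian, integral_const_mul,
    integral_finsetSum _ fun j _ => integrable_ite_strictMono_comp α hρ j, hterm]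
  exact div_choose_mul_sum_ite_strictMono_const hN _

theorem neg_mul_integral_le_log_partitionFunction (hρ : Measurable ρ) (hb : ∀ y, b ≤ ρ y)
    (hint : Integrable ρ (Measure.pi fun _ => α)) {N : ℕ} (hN : n ≤ N) :
    -(N * ∫ y, ρ y ∂Measure.pi fun _ => α) ≤ Real.log (partitionFunction α ρ N) := by
  rw [Real.le_log_iff_exp_le (partitionFunction_pos α hρ hb hN),
    ← integral_meanFieldHamiltonian α hint hN, ← integral_neg]
  exact convexOn_exp.map_integral_le Real.continuous_exp.continuousOn isClosed_univ
    (.of_forall fun _ => Set.mem_univ _) (integrable_meanFieldHamiltonian α hint N).neg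
    (integrable_exp_neg_meanFieldHamiltonian α hρ hb hN)

theorem integrable_exp_neg_meanFieldHamiltonian_restrict_mul (hρ : Measurable ρ)
    (hb : ∀ y, b ≤ ρ y) {N : ℕ} {S : Finset (Fin N)} (hS : n ≤ #S) (hSc : n ≤ #Sᶜ) :
    Integrable (fun x => Real.exp (-meanFieldHamiltonian ρ #S (x ∘ S.orderEmbOfFin rfl))
      * Real.exp (-meanFieldHamiltonian ρ #Sᶜ (x ∘ Sᶜ.orderEmbOfFin rfl)))
      (Measure.pi fun _ => α) :=
  Integrable.comp_inl_mul_comp_inr α (.ofBijective _ S.bijective_sumElim_orderEmbOfFin_compl)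
    (integrable_exp_neg_meanFieldHamiltonian α hρ hb hS)
    (integrable_exp_neg_meanFieldHamiltonian α hρ hb hSc)

theorem integral_exp_neg_meanFieldHamiltonian_restrict_mul {N : ℕ} (S : Finset (Fin N)) :
    ∫ x, Real.exp (-meanFieldHamiltonian ρ #S (x ∘ S.orderEmbOfFin rfl))
      * Real.exp (-meanFieldHamiltonian ρ #Sᶜ (x ∘ Sᶜ.orderEmbOfFin rfl)) ∂Measure.pi (fun _ => α)
      = partitionFunction α ρ #S * partitionFunction α ρ #Sᶜ :=
  integral_comp_inl_mul_comp_inr α (.ofBijective _ S.bijective_sumElim_orderEmbOfFin_compl)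
    (fun y => Real.exp (-meanFieldHamiltonian ρ #S y))
    (fun z => Real.exp (-meanFieldHamiltonian ρ #Sᶜ z))

theorem partitionFunction_add_le_mul (hρ : Measurable ρ) (hb : ∀ y, b ≤ ρ y) {N₁ N₂ : ℕ}
    (h₁ : n ≤ N₁) (h₂ : n ≤ N₂) :
    partitionFunction α ρ (N₁ + N₂) ≤ partitionFunction α ρ N₁ * partitionFunction α ρ N₂ := by
  have hC : ((N₁ + N₂).choose N₁ : ℝ) ≠ 0 := by
    exact_mod_cast (Nat.choose_pos (Nat.le_add_right _ _)).ne'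
  have hcard {S : Finset (Fin (N₁ + N₂))} (hS : S ∈ powersetCard N₁ univ) :
      #S = N₁ ∧ #Sᶜ = N₂ := by
    rw [card_compl, Fintype.card_fin, (mem_powersetCard.1 hS).2]
    omega
  have hint {S : Finset (Fin (N₁ + N₂))} (hS : S ∈ powersetCard N₁ univ) :=
    (integrable_exp_neg_meanFieldHamiltonian_restrict_mul α hρ hb (ρ := ρ)
      (h₁.trans_eq (hcard hS).1.symm) (h₂.trans_eq (hcard hS).2.symm)).const_mul
      ((N₁ + N₂).choose N₁ : ℝ)⁻¹
  calc partitionFunction α ρ (N₁ + N₂)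
      ≤ ∫ x, ∑ S ∈ powersetCard N₁ univ, ((N₁ + N₂).choose N₁ : ℝ)⁻¹ *
          (Real.exp (-meanFieldHamiltonian ρ #S (x ∘ S.orderEmbOfFin rfl))
            * Real.exp (-meanFieldHamiltonian ρ #Sᶜ (x ∘ Sᶜ.orderEmbOfFin rfl)))
          ∂Measure.pi (fun _ => α) :=
        integral_mono (integrable_exp_neg_meanFieldHamiltonian α hρ hb (h₁.trans le_self_add))
          (integrable_finsetSum _ fun S hS => hint hS)
          (exp_neg_meanFieldHamiltonian_add_le ρ h₁ h₂)
    _ = ∑ S ∈ powersetCard N₁ (univ : Finset (Fin (N₁ + N₂))), ((N₁ + N₂).choose N₁ : ℝ)⁻¹ *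
          (partitionFunction α ρ N₁ * partitionFunction α ρ N₂) := by
        rw [integral_finsetSum _ fun S hS => hint hS]
        refine sum_congr rfl fun S hS => ?_
        rw [integral_const_mul, integral_exp_neg_meanFieldHamiltonian_restrict_mul,
          (hcard hS).1, (hcard hS).2]
    _ = _ := by simp [hC]

theorem log_partitionFunction_add_le (hρ : Measurable ρ) (hb : ∀ y, b ≤ ρ y) {N₁ N₂ : ℕ}
    (h₁ : n ≤ N₁) (h₂ : n ≤ N₂) :
    Real.log (partitionFunction α ρ (N₁ + N₂))
      ≤ Real.log (partitionFunction α ρ N₁) + Real.log (partitionFunction α ρ N₂) := by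
  rw [← Real.log_mul (partitionFunction_pos α hρ hb h₁).ne' (partitionFunction_pos α hρ hb h₂).ne']
  exact Real.log_le_log (partitionFunction_pos α hρ hb (h₁.trans le_self_add))
    (partitionFunction_add_le_mul α hρ hb h₁ h₂)

theorem toReal_lintegral_expNeg_eq_partitionFunction {φ : (Fin n → Ω) → EReal}
    (hφ : Measurable φ) (hbot : ∀ y, φ y ≠ ⊥)
    (hfin : (Measure.pi fun _ : Fin n => α) {y | φ y = ⊤} = 0) (N : ℕ) :
    (∫⁻ x : Fin N → Ω, expNeg ((((N : ℝ) / (N.choose n : ℝ) : ℝ) : EReal) *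
        ∑ j : Fin n → Fin N, (if StrictMono j then φ (x ∘ j) else 0))
      ∂(Measure.pi fun _ => α)).toReal = partitionFunction α (fun y => (φ y).toReal) N := by
  have hae : ∀ᵐ x ∂Measure.pi (fun _ : Fin N => α),
      expNeg ((((N : ℝ) / (N.choose n : ℝ) : ℝ) : EReal) *
        ∑ j : Fin n → Fin N, (if StrictMono j then φ (x ∘ j) else 0))
      = ENNReal.ofReal (Real.exp (-meanFieldHamiltonian (fun y => (φ y).toReal) N x)) := by
    filter_upwards [ae_forall_comp_of_injective α (P := fun y => φ y ≠ ⊤)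
      (ae_iff.2 (by simpa using hfin))] with x hx
    have hsum : ∑ j : Fin n → Fin N, (if StrictMono j then φ (x ∘ j) else 0)
        = ((∑ j : Fin n → Fin N, if StrictMono j then (φ (x ∘ j)).toReal else 0 : ℝ) : EReal) := by
      rw [EReal.coe_finsetSum]
      refine sum_congr rfl fun j _ => ?_
      split_ifs with hj
      exacts [(EReal.coe_toReal (hx j hj.injective) (hbot _)).symm, EReal.coe_zero.symm]
    simp [hsum, ← EReal.coe_mul, expNeg, meanFieldHamiltonian]
  rw [lintegral_congr_ae hae, partitionFunction]
  exact (integral_eq_lintegral_of_nonneg_ae (.of_forall fun _ => (Real.exp_pos _).le)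
    (measurable_meanFieldHamiltonian hφ.ereal_toReal N).neg.exp.aestronglyMeasurable).symm

end PartitionFunction

theorem pressure_subadditive_and_converges_general
    {Ω : Type*} [MeasurableSpace Ω]
    (α : Measure Ω) [IsProbabilityMeasure α] (n : ℕ) (hn : 1 ≤ n)
    (φ : (Fin n → Ω) → EReal) (hmeas : Measurable φ)
    (c : ℝ) (hlb : ∀ y, (c : EReal) ≤ φ y)
    (hfin : (Measure.pi fun _ : Fin n => α) {y | φ y = ⊤} = 0)
    (hint : Integrable (fun y => (φ y).toReal) (Measure.pi fun _ : Fin n => α))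
    (p : ℕ → ℝ)
    (hp : ∀ N : ℕ, p N = (N : ℝ)⁻¹ * Real.log ((∫⁻ x : Fin N → Ω,
        expNeg ((((N : ℝ) / (N.choose n : ℝ) : ℝ) : EReal) *
          ∑ j : Fin n → Fin N, (if StrictMono j then φ (x ∘ j) else 0))
        ∂(Measure.pi fun (_ : Fin N) => α)).toReal)) :
    (∀ N₁ N₂ : ℕ, n ≤ N₁ → n ≤ N₂ →
        ((N₁ + N₂ : ℕ) : ℝ) * p (N₁ + N₂) ≤ (N₁ : ℝ) * p N₁ + (N₂ : ℝ) * p N₂)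
    ∧ (∀ N : ℕ, n ≤ N →
        -(∫ y, (φ y).toReal ∂(Measure.pi fun _ : Fin n => α)) ≤ p N)
    ∧ ∃ L : ℝ, Tendsto p atTop (nhds L) := by
  set ρ : (Fin n → Ω) → ℝ := fun y => (φ y).toReal
  have hρ : Measurable ρ := hmeas.ereal_toReal
  have hρb (y : Fin n → Ω) : min c 0 ≤ ρ y := EReal.min_le_toReal (hlb y)
  have hp' (N : ℕ) : p N = Real.log (partitionFunction α ρ N) / N := by
    rw [hp, toReal_lintegral_expNeg_eq_partitionFunction α hmeas
      (fun y => ne_bot_of_le_ne_bot (EReal.coe_ne_bot c) (hlb y)) hfin, inv_mul_eq_div]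
  have hN₀ {N : ℕ} (hN : n ≤ N) : (0 : ℝ) < N := by exact_mod_cast hn.trans hN
  have hmul {N : ℕ} (hN : n ≤ N) : (N : ℝ) * p N = Real.log (partitionFunction α ρ N) := by
    rw [hp', mul_div_cancel₀ _ (hN₀ hN).ne']
  have hlow {N : ℕ} (hN : n ≤ N) : -(∫ y, ρ y ∂Measure.pi fun _ => α) ≤ p N := by
    have h := neg_mul_integral_le_log_partitionFunction α hρ hρb hint hN
    rw [← hmul hN, ← mul_neg] at h
    exact le_of_mul_le_mul_left h (hN₀ hN)
  have hsub (N₁ N₂ : ℕ) (h₁ : n ≤ N₁) (h₂ : n ≤ N₂) :=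
    log_partitionFunction_add_le α hρ hρb h₁ h₂
  refine ⟨fun N₁ N₂ h₁ h₂ => ?_, fun N hN => hlow hN, ?_⟩
  · rw [hmul h₁, hmul h₂, hmul (h₁.trans le_self_add)]
    exact hsub N₁ N₂ h₁ h₂
  · have hbdd : BddBelow ((fun N => Real.log (partitionFunction α ρ N) / N) '' Set.Ici n) :=
      ⟨_, by rintro _ ⟨N, hN, rfl⟩; exact (hp' N) ▸ hlow hN⟩
    exact ⟨_, (tendsto_div_sInf_of_subadditive_ge (by omega) hsub hbdd).congr fun N => (hp' N).symm⟩

/-- For the mean-field Hamiltonian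
`H_N(x) = N·binom(N,n)⁻¹·Σ_{i(1)<…<i(n)} φ(x_{i(1)},…,x_{i(n)})` with
`φ : Ω^n → ℝ ∪ {+∞}` Borel measurable, bounded below, symmetric and `α^{⊗n}(φ) < ∞`,
the sequence `N·p(N)` is subadditive, `p(N) ≥ −α^{⊗n}(φ)` for `N ≥ n`, and hence
`p(N)` converges to a finite limit. -/
theorem pressure_subadditive_and_converges
    {Ω : Type*} [MetricSpace Ω] [CompactSpace Ω] [MeasurableSpace Ω] [BorelSpace Ω]
    (α : Measure Ω) [IsProbabilityMeasure α] (n : ℕ) (hn : 1 ≤ n)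
    (φ : (Fin n → Ω) → EReal) (hmeas : Measurable φ)
    (c : ℝ) (hlb : ∀ y, (c : EReal) ≤ φ y)
    (hsym : ∀ (σ : Equiv.Perm (Fin n)) (y : Fin n → Ω), φ (y ∘ σ) = φ y)
    (hfin : (Measure.pi fun _ : Fin n => α) {y | φ y = ⊤} = 0)
    (hint : Integrable (fun y => (φ y).toReal) (Measure.pi fun _ : Fin n => α))
    (p : ℕ → ℝ)
    (hp : ∀ N : ℕ, p N = (N : ℝ)⁻¹ * Real.log ((∫⁻ x : Fin N → Ω,
        expNeg ((((N : ℝ) / (N.choose n : ℝ) : ℝ) : EReal) *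
          ∑ j : Fin n → Fin N, (if StrictMono j then φ (x ∘ j) else 0))
        ∂(Measure.pi fun (_ : Fin N) => α)).toReal)) :
    (∀ N₁ N₂ : ℕ, n ≤ N₁ → n ≤ N₂ →
        ((N₁ + N₂ : ℕ) : ℝ) * p (N₁ + N₂) ≤ (N₁ : ℝ) * p N₁ + (N₂ : ℝ) * p N₂)
    ∧ (∀ N : ℕ, n ≤ N →
        -(∫ y, (φ y).toReal ∂(Measure.pi fun _ : Fin n => α)) ≤ p N)
    ∧ ∃ L : ℝ, Tendsto p atTop (nhds L) :=
  pressure_subadditive_and_converges_general α n hn φ hmeas c hlb hfin hint p hp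
end
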